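/- Let S_k = 2 − 2^{−k}. If 2^M ≤ log(4T)/6 and a := (2T)^{1/S_{M−1}} · (log((2T)^{15/(2^M−1)}))^{1/4 − (3/4)/(2^M−1)}, then a^{S_{M−1}} ≥ √(15/(16e)) · T · (log(2T/a^{S_{M−5}}))^{S_{M−3}/4}. -/

import Mathlib

open Real

/-- `S k = 2 - 2^{-k}` for `k ≥ 0`, and `S k = 0` for `k < 0`. -/
noncomputable def Sfun (k : ℤ) : ℝ := if k < 0 then 0 else 2 - (2 : ℝ) ^ (-k)

/-!
Write `x = 2^M`, `Y = 2T` and `L = log (Y^{15/(x-1)})`, so that `a = Y^{1/S_{M-1}} L^β` with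
`β = 1/4 - 3/(4(x-1))`. Since `β S_{M-1} = S_{M-3}/4`, the right-hand side is exactly
`a^{S_{M-1}} = Y L^{S_{M-3}/4}`, and it remains to see that `G = log (Y / a^{S_{M-5}})` lies in
`[0, L]`. For `M ≤ 4` this is `G = log Y ≤ L` since `x ≤ 16`; for `M ≥ 5` the powers of `Y`
combine to `G = L - S_{M-5} β log L` with `0 ≤ S_{M-5} β ≤ 1/2`, and `L ≥ 1`.
-/

lemma Sfun_of_neg {k : ℤ} (hk : k < 0) : Sfun k = 0 := if_pos hk

lemma Sfun_nonneg (k : ℤ) : 0 ≤ Sfun k := by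
  unfold Sfun
  split_ifs with hk
  · exact le_rfl
  · linarith [zpow_le_one_of_nonpos₀ (one_le_two : (1 : ℝ) ≤ 2) (by omega : -k ≤ 0)]

/-- Since `S_{-1} = 0 = 2 - 2^1`, the formula `S_k = 2 - 2^{-k}` extends to `k = -1`. -/
lemma Sfun_natCast_sub (M j : ℕ) (hj : j ≤ M + 1) :
    Sfun ((M : ℤ) - j) = 2 - 2 ^ j / 2 ^ M := by
  unfold Sfun
  split_ifs with hneg
  · obtain rfl : j = M + 1 := by omega
    field_simp
    ring
  · rw [neg_sub, zpow_sub₀ two_ne_zero, zpow_natCast, zpow_natCast]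

lemma rpow_one_div_mul_rpow_rpow {Y L : ℝ} (hY : 0 ≤ Y) (hL : 0 ≤ L) {s : ℝ} (hs : s ≠ 0)
    (β : ℝ) : (Y ^ (1 / s) * L ^ β) ^ s = Y * L ^ (β * s) := by
  rw [mul_rpow (rpow_nonneg hY _) (rpow_nonneg hL _), ← rpow_mul hY, ← rpow_mul hL,
    one_div_mul_cancel hs, rpow_one]

lemma log_div_rpow_one_div_mul_rpow {Y L : ℝ} (hY : 0 < Y) (hL : 0 < L) (s β r : ℝ) :
    log (Y / (Y ^ (1 / s) * L ^ β) ^ r) = (1 - r / s) * log Y - r * β * log L := by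
  rw [log_div hY.ne' (by positivity), log_rpow (by positivity),
    log_mul (by positivity) (by positivity), log_rpow hY, log_rpow hL]
  ring

lemma one_le_fifteen_div_mul_log {M : ℕ} (hM : 1 ≤ M) {y : ℝ} (hy : 0 < y)
    (hMy : (2 : ℝ) ^ M ≤ log (4 * y) / 6) : 1 ≤ 15 / ((2 : ℝ) ^ M - 1) * log (2 * y) := by
  have hx : (2 : ℝ) ≤ 2 ^ M := by exact_mod_cast Nat.pow_le_pow_right two_pos hM
  have hlog4 : log (4 * y) = log 2 + log (2 * y) := by
    rw [← log_mul two_ne_zero (by positivity)]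
    ring_nf
  have := log_two_lt_d9
  rw [div_mul_eq_mul_div, le_div_iff₀ (by linarith)]
  linarith

section GridPoint

variable {M : ℕ} {Y L a : ℝ}

lemma rpow_Sfun_sub_one_eq (hM : 2 ≤ M) (hY : 0 ≤ Y) (hL : 0 ≤ L)
    (ha : a = Y ^ (1 / Sfun ((M : ℤ) - 1)) *
      L ^ ((1 : ℝ) / 4 - 3 / 4 * (1 / ((2 : ℝ) ^ M - 1)))) :
    a ^ Sfun ((M : ℤ) - 1) = Y * L ^ (Sfun ((M : ℤ) - 3) / 4) := by
  have hx : (4 : ℝ) ≤ 2 ^ M := by exact_mod_cast Nat.pow_le_pow_right two_pos hM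
  have hS1 : Sfun ((M : ℤ) - 1) = 2 - 2 / 2 ^ M :=
    (Sfun_natCast_sub M 1 (by omega)).trans (by norm_num)
  have hS3 : Sfun ((M : ℤ) - 3) = 2 - 8 / 2 ^ M :=
    (Sfun_natCast_sub M 3 (by omega)).trans (by norm_num)
  have hS1_ne : (2 : ℝ) - 2 / 2 ^ M ≠ 0 := by
    have : (2 : ℝ) / 2 ^ M ≤ 1 / 2 := by rw [div_le_iff₀ (by linarith)]; linarith
    linarith
  rw [ha, hS1, rpow_one_div_mul_rpow_rpow hY hL hS1_ne, hS3]
  have : (2 : ℝ) ^ M - 1 ≠ 0 := by linarith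
  field_simp
  ring_nf

lemma log_div_rpow_Sfun_sub_five_mem (hM : 2 ≤ M) (hY : 1 ≤ Y) (hL : 1 ≤ L)
    (hLY : L = 15 / ((2 : ℝ) ^ M - 1) * log Y)
    (ha : a = Y ^ (1 / Sfun ((M : ℤ) - 1)) *
      L ^ ((1 : ℝ) / 4 - 3 / 4 * (1 / ((2 : ℝ) ^ M - 1)))) :
    0 ≤ log (Y / a ^ Sfun ((M : ℤ) - 5)) ∧ log (Y / a ^ Sfun ((M : ℤ) - 5)) ≤ L := by
  have hlogY : 0 ≤ log Y := log_nonneg hY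
  rcases le_or_gt M 4 with hM4 | hM5
  · have hx : (2 : ℝ) ^ M ≤ 16 := by exact_mod_cast Nat.pow_le_pow_right two_pos hM4
    have hx1 : (4 : ℝ) ≤ 2 ^ M := by exact_mod_cast Nat.pow_le_pow_right two_pos hM
    rw [Sfun_of_neg (by omega), rpow_zero, div_one]
    refine ⟨hlogY, ?_⟩
    rw [hLY, div_mul_eq_mul_div, le_div_iff₀ (by linarith)]
    nlinarith
  · have hx : (32 : ℝ) ≤ 2 ^ M := by exact_mod_cast Nat.pow_le_pow_right two_pos hM5
    have hS1 : Sfun ((M : ℤ) - 1) = 2 - 2 / 2 ^ M :=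
      (Sfun_natCast_sub M 1 (by omega)).trans (by norm_num)
    have hS5 : Sfun ((M : ℤ) - 5) = 2 - 32 / 2 ^ M :=
      (Sfun_natCast_sub M 5 (by omega)).trans (by norm_num)
    rw [ha, hS1, hS5, log_div_rpow_one_div_mul_rpow (by linarith : 0 < Y) (by linarith : 0 < L)]
    generalize (2 : ℝ) ^ M = x at hx hLY ⊢
    have hexp : 1 - (2 - 32 / x) / (2 - 2 / x) = 15 / (x - 1) := by
      have : x - 1 ≠ 0 := by linarith
      field_simp
      ring
    have hr : 0 ≤ 2 - 32 / x ∧ 2 - 32 / x ≤ 2 := by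
      have : 32 / x ≤ 1 := by rw [div_le_one₀ (by linarith)]; exact hx
      exact ⟨by linarith, by linarith [div_nonneg (by norm_num : (0 : ℝ) ≤ 32) (by linarith : 0 ≤ x)]⟩
    have hβ : 0 ≤ (1 : ℝ) / 4 - 3 / 4 * (1 / (x - 1)) ∧
        (1 : ℝ) / 4 - 3 / 4 * (1 / (x - 1)) ≤ 1 / 4 := by
      have : 1 / (x - 1) ≤ 1 / 3 := one_div_le_one_div_of_le (by norm_num) (by linarith)
      exact ⟨by linarith, by linarith [one_div_nonneg.mpr (by linarith : 0 ≤ x - 1)]⟩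
    have hlogL : 0 ≤ log L ∧ log L ≤ L - 1 :=
      ⟨log_nonneg hL, log_le_sub_one_of_pos (by linarith)⟩
    rw [hexp, ← hLY]
    constructor <;> nlinarith [mul_nonneg hr.1 hβ.1, mul_le_mul hr.2 hβ.2 hβ.1 (by norm_num)]

end GridPoint

/-- First property of the choice of `a` for the minimax grid:
if `2^M ≤ log(4T)/6` then `a^{S_{M-1}} ≥ √(15/(16e)) T (log(2T/a^{S_{M-5}}))^{S_{M-3}/4}`. -/
theorem stmt8 (T M : ℕ) (hT : 2 ≤ T) (hM : 2 ≤ M)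
    (hMT : (2 : ℝ) ^ M ≤ Real.log (4 * T) / 6) (a : ℝ)
    (ha : a = (2 * (T : ℝ)) ^ (1 / Sfun ((M : ℤ) - 1)) *
        (Real.log ((2 * (T : ℝ)) ^ ((15 : ℝ) / ((2 : ℝ) ^ M - 1)))) ^
          ((1 : ℝ) / 4 - (3 / 4) * (1 / ((2 : ℝ) ^ M - 1)))) :
    Real.sqrt (15 / (16 * Real.exp 1)) * T *
        (Real.log (2 * T / a ^ Sfun ((M : ℤ) - 5))) ^ (Sfun ((M : ℤ) - 3) / 4) ≤
      a ^ Sfun ((M : ℤ) - 1) := by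
  have hY : (1 : ℝ) ≤ 2 * T := by
    have : (2 : ℝ) ≤ T := by exact_mod_cast hT
    linarith
  rw [log_rpow (by linarith)] at ha
  set L := 15 / ((2 : ℝ) ^ M - 1) * log (2 * T) with hLY
  have hL : 1 ≤ L := one_le_fifteen_div_mul_log (by omega) (by linarith) hMT
  obtain ⟨hG0, hGL⟩ := log_div_rpow_Sfun_sub_five_mem hM hY hL hLY ha
  have hsqrt : sqrt (15 / (16 * exp 1)) ≤ 1 := by
    rw [sqrt_le_one, div_le_one (by positivity)]
    linarith [add_one_le_exp 1]
  have hp := div_nonneg (Sfun_nonneg ((M : ℤ) - 3)) zero_le_four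
  rw [rpow_Sfun_sub_one_eq hM (by linarith) (by linarith) ha]
  calc sqrt (15 / (16 * exp 1)) * T *
        log (2 * T / a ^ Sfun ((M : ℤ) - 5)) ^ (Sfun ((M : ℤ) - 3) / 4)
      ≤ 1 * T * L ^ (Sfun ((M : ℤ) - 3) / 4) := by gcongr
    _ ≤ 2 * T * L ^ (Sfun ((M : ℤ) - 3) / 4) := by gcongr; norm_num
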